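/- arXiv:1305.7347 — 2 statements merged into one kernel-verified Lean document; each statement's English description precedes it below -/
import Mathlib

section
/- Let K ≤ 0, let a : I → ℝ be a twice differentiable positive function on an interval I, let ρ, P : I → ℝ satisfy ρ(t) ≥ 3P(t) ≥ 0 and the Friedmann equations 3(a'(t)² + K)/a(t)² = 8π ρ(t) and 2a''(t)/a(t) + (a'(t)² + K)/a(t)² = -8π P(t) on I, and set H = a'/a. Then at every t ∈ I with H(t) ≠ 0 one has 1 ≤ -H'(t)/H(t)² ≤ 2, i.e. H(t)² ≤ -H'(t) ≤ 2 H(t)². -/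
open Real

/-! The derivative of `H = a'/a` is `H' = a''/a - H²`. Eliminating the curvature term between the
two Friedmann equations gives the Raychaudhuri equation `a''/a = -(4π/3)(ρ + 3P)`, which is `≤ 0`
and so yields `H² ≤ -H'`. The first equation alone gives `H² = 8πρ/3 - K/a²`, and with `3P ≤ ρ`
and `K ≤ 0` this dominates `(4π/3)(ρ + 3P) = -a''/a`, i.e. `-H' ≤ 2H²`. -/

theorem HasDerivWithinAt.fun_div_self_sub_sq {𝕜 : Type*} [NontriviallyNormedField 𝕜]
    {a a' : 𝕜 → 𝕜} {a'' t : 𝕜} {s : Set 𝕜}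
    (ha : HasDerivWithinAt a (a' t) s t) (ha' : HasDerivWithinAt a' a'' s t) (hat : a t ≠ 0) :
    HasDerivWithinAt (fun x => a' x / a x) (a'' / a t - (a' t / a t) ^ 2) s t :=
  (ha'.fun_div ha hat).congr_deriv (by field_simp)

theorem friedmann_raychaudhuri {a a' a'' K ρ P : ℝ}
    (hF1 : 3 * (a' ^ 2 + K) / a ^ 2 = 8 * π * ρ)
    (hF2 : 2 * a'' / a + (a' ^ 2 + K) / a ^ 2 = -(8 * π * P)) :
    a'' / a = -(4 * π / 3) * (ρ + 3 * P) := by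
  rw [mul_div_assoc] at hF1 hF2
  linarith

theorem friedmann_hubble_sq {a a' K ρ : ℝ} (ha : a ≠ 0)
    (hF1 : 3 * (a' ^ 2 + K) / a ^ 2 = 8 * π * ρ) :
    (a' / a) ^ 2 = 8 * π * ρ / 3 - K / a ^ 2 := by
  field_simp at hF1 ⊢
  linarith

theorem friedmann_deceleration_bounds_general
    (K : ℝ) (hK : K ≤ 0) (I : Set ℝ)
    (a a' a'' ρ P : ℝ → ℝ)
    (ha : ∀ t ∈ I, HasDerivWithinAt a (a' t) I t)
    (ha' : ∀ t ∈ I, HasDerivWithinAt a' (a'' t) I t)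
    (hpos : ∀ t ∈ I, 0 < a t)
    (hec : ∀ t ∈ I, 3 * P t ≤ ρ t ∧ 0 ≤ P t)
    (hF1 : ∀ t ∈ I, 3 * ((a' t) ^ 2 + K) / (a t) ^ 2 = 8 * π * ρ t)
    (hF2 : ∀ t ∈ I, 2 * a'' t / a t + ((a' t) ^ 2 + K) / (a t) ^ 2 = -(8 * π * P t)) :
    ∀ t ∈ I, a' t / a t ≠ 0 →
      ∃ d : ℝ, HasDerivWithinAt (fun s => a' s / a s) d I t ∧
        (a' t / a t) ^ 2 ≤ -d ∧ -d ≤ 2 * (a' t / a t) ^ 2 := by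
  intro t ht _
  have hat : a t ≠ 0 := (hpos t ht).ne'
  have hq := friedmann_raychaudhuri (hF1 t ht) (hF2 t ht)
  have hH := friedmann_hubble_sq hat (hF1 t ht)
  obtain ⟨hPρ, hP⟩ := hec t ht
  have hstrong : 0 ≤ π * (ρ t + 3 * P t) := mul_nonneg pi_pos.le (by linarith)
  have hdom : 0 ≤ π * (ρ t - 3 * P t) := mul_nonneg pi_pos.le (by linarith)
  have hcurv : K / a t ^ 2 ≤ 0 := div_nonpos_of_nonpos_of_nonneg hK (sq_nonneg _)
  refine ⟨_, (ha t ht).fun_div_self_sub_sq (ha' t ht) hat, ?_, ?_⟩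
  · linarith
  · linarith

/-- For `K ≤ 0` and a positive twice differentiable scale factor `a` on an interval `I`
satisfying the Friedmann equations with energy condition `ρ ≥ 3P ≥ 0`, at every point of `I`
where the Hubble parameter `H = a'/a` does not vanish, the derivative `H'` of `H`
(within `I`) satisfies `H² ≤ -H' ≤ 2H²`, i.e. `1 ≤ -H'/H² ≤ 2`. -/
theorem friedmann_deceleration_bounds
    (K : ℝ) (hK : K ≤ 0) (I : Set ℝ) (hI : I.OrdConnected)
    (a a' a'' ρ P : ℝ → ℝ)
    (ha : ∀ t ∈ I, HasDerivWithinAt a (a' t) I t)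
    (ha' : ∀ t ∈ I, HasDerivWithinAt a' (a'' t) I t)
    (hpos : ∀ t ∈ I, 0 < a t)
    (hec : ∀ t ∈ I, 3 * P t ≤ ρ t ∧ 0 ≤ P t)
    (hF1 : ∀ t ∈ I, 3 * ((a' t) ^ 2 + K) / (a t) ^ 2 = 8 * π * ρ t)
    (hF2 : ∀ t ∈ I, 2 * a'' t / a t + ((a' t) ^ 2 + K) / (a t) ^ 2 = -(8 * π * P t)) :
    ∀ t ∈ I, a' t / a t ≠ 0 →
      ∃ d : ℝ, HasDerivWithinAt (fun s => a' s / a s) d I t ∧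
        (a' t / a t) ^ 2 ≤ -d ∧ -d ≤ 2 * (a' t / a t) ^ 2 :=
  friedmann_deceleration_bounds_general K hK I a a' a'' ρ P ha ha' hpos hec hF1 hF2
end

section
/- Let a : [t₀, ∞) → ℝ be a twice differentiable positive function and let ρ, P : [t₀, ∞) → ℝ satisfy ρ(t) ≥ 3P(t) ≥ 0 and the Friedmann equations with curvature parameter K = 1, namely 3(a'(t)² + 1)/a(t)² = 8π ρ(t) and 2a''(t)/a(t) + (a'(t)² + 1)/a(t)² = -8π P(t), for all t ≥ t₀. Set H = a'/a and suppose H(t₀) > 0. Then there exists t_c ≥ t₀ with H(t_c) = 0; i.e. the Hubble parameter of a closed (K = 1) Friedmann model cannot remain positive for all time. -/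
/-!
With `P ≥ 0` the second Friedmann equation gives `2 a a'' + a'² + 1 ≤ 0`. If `a'` stayed positive,
the first integral `a (a'² + 1)` would be nonincreasing, so `a ≤ C` for a constant `C`; then
`a'' ≤ -1 / (2 C)`, and `a'` would become negative in finite time.
-/

open Real Set

lemma IsPreconnected.pos_of_ne_zero {X : Type*} [TopologicalSpace X] {s : Set X}
    (hs : IsPreconnected s) {f : X → ℝ} (hf : ContinuousOn f s) {x₀ : X} (hx₀ : x₀ ∈ s)
    (h₀ : 0 < f x₀) (hne : ∀ x ∈ s, f x ≠ 0) {x : X} (hx : x ∈ s) : 0 < f x := by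
  by_contra! hle
  obtain ⟨c, hc, hfc⟩ := hs.intermediate_value hx hx₀ hf ⟨hle, h₀.le⟩
  exact hne c hc hfc

section Ici

variable {t₀ : ℝ}

lemma antitoneOn_Ici_of_hasDerivWithinAt_nonpos {f f' : ℝ → ℝ}
    (hf : ∀ t ∈ Ici t₀, HasDerivWithinAt f (f' t) (Ici t₀) t)
    (hf'₀ : ∀ t ∈ Ici t₀, f' t ≤ 0) : AntitoneOn f (Ici t₀) :=
  antitoneOn_of_hasDerivWithinAt_nonpos (convex_Ici t₀)
    (fun t ht => (hf t ht).continuousWithinAt)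
    (fun t ht => (hf t (interior_subset ht)).mono interior_subset)
    (fun t ht => hf'₀ t (interior_subset ht))

lemma le_sub_mul_of_hasDerivWithinAt_le_neg {f f' : ℝ → ℝ} {c : ℝ}
    (hf : ∀ t ∈ Ici t₀, HasDerivWithinAt f (f' t) (Ici t₀) t)
    (hf' : ∀ t ∈ Ici t₀, f' t ≤ -c) {t : ℝ} (ht : t ∈ Ici t₀) :
    f t ≤ f t₀ - c * (t - t₀) := by
  have hanti : AntitoneOn (fun s => f s + c * s) (Ici t₀) :=
    antitoneOn_Ici_of_hasDerivWithinAt_nonpos (f' := fun s => f' s + c)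
      (fun s hs => ((hf s hs).add ((hasDerivWithinAt_id s _).const_mul c)).congr_deriv
        (by simp only [mul_one]))
      (fun s hs => by linarith [hf' s hs])
  have := hanti self_mem_Ici ht ht
  simp only at this
  linarith

variable {a a' a'' : ℝ → ℝ}
  (ha : ∀ t ∈ Ici t₀, HasDerivWithinAt a (a' t) (Ici t₀) t)
  (ha' : ∀ t ∈ Ici t₀, HasDerivWithinAt a' (a'' t) (Ici t₀) t)
  (hdecel : ∀ t ∈ Ici t₀, 2 * a t * a'' t + a' t ^ 2 + 1 ≤ 0)
include ha ha' hdecel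

lemma antitoneOn_mul_sq_add_one (hexp : ∀ t ∈ Ici t₀, 0 ≤ a' t) :
    AntitoneOn (fun t => a t * (a' t ^ 2 + 1)) (Ici t₀) :=
  antitoneOn_Ici_of_hasDerivWithinAt_nonpos
    (f' := fun t => a' t * (2 * a t * a'' t + a' t ^ 2 + 1))
    (fun t ht => ((ha t ht).mul (((ha' t ht).fun_pow 2).add_const 1)).congr_deriv (by
      push_cast
      ring))
    (fun t ht => mul_nonpos_of_nonneg_of_nonpos (hexp t ht) (hdecel t ht))

lemma exists_eq_zero_of_two_mul_mul_add_sq_add_one_nonpos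
    (hpos : ∀ t ∈ Ici t₀, 0 < a t) (h₀ : 0 < a' t₀) : ∃ t ∈ Ici t₀, a' t = 0 := by
  by_contra! hne
  have hexp : ∀ t ∈ Ici t₀, 0 < a' t := fun t ht =>
    isPreconnected_Ici.pos_of_ne_zero (fun s hs => (ha' s hs).continuousWithinAt)
      self_mem_Ici h₀ hne ht
  set C := a t₀ * (a' t₀ ^ 2 + 1)
  have hC : 0 < C := by have := hpos t₀ self_mem_Ici; positivity
  have hbounded : ∀ t ∈ Ici t₀, a t ≤ C := fun t ht => by
    have := antitoneOn_mul_sq_add_one ha ha' hdecel (fun s hs => (hexp s hs).le)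
      self_mem_Ici ht ht
    nlinarith [hpos t ht, sq_nonneg (a' t)]
  have haccel : ∀ t ∈ Ici t₀, a'' t ≤ -(1 / (2 * C)) := fun t ht => by
    have h2C : a'' t * (2 * C) ≤ -1 := by
      nlinarith [hdecel t ht, hpos t ht, hbounded t ht, sq_nonneg (a' t)]
    rw [le_neg, div_le_iff₀ (by positivity)]
    linarith
  set T := t₀ + 2 * C * a' t₀
  have hT : T ∈ Ici t₀ := by
    simp only [T, mem_Ici, le_add_iff_nonneg_right]; positivity
  have := le_sub_mul_of_hasDerivWithinAt_le_neg ha' haccel hT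
  have hzero : 1 / (2 * C) * (T - t₀) = a' t₀ := by field_simp [T]; ring
  linarith [hexp T hT]

end Ici

lemma two_mul_mul_add_sq_add_one_nonpos_of_friedmann {a a' a'' P : ℝ} (ha : 0 < a) (hP : 0 ≤ P)
    (hF2 : 2 * a'' / a + (a' ^ 2 + 1) / a ^ 2 = -(8 * π * P)) :
    2 * a * a'' + a' ^ 2 + 1 ≤ 0 := by
  have hmul : 2 * a * a'' + a' ^ 2 + 1 = -(8 * π * P) * a ^ 2 := by
    rw [← hF2]; field_simp; ring
  rw [hmul]
  exact mul_nonpos_of_nonpos_of_nonneg (neg_nonpos.mpr (by positivity)) (sq_nonneg a)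

theorem closed_friedmann_hubble_vanishes_general
    (t₀ : ℝ) (a a' a'' ρ P : ℝ → ℝ)
    (ha : ∀ t ∈ Set.Ici t₀, HasDerivWithinAt a (a' t) (Set.Ici t₀) t)
    (ha' : ∀ t ∈ Set.Ici t₀, HasDerivWithinAt a' (a'' t) (Set.Ici t₀) t)
    (hpos : ∀ t ∈ Set.Ici t₀, 0 < a t)
    (hec : ∀ t ∈ Set.Ici t₀, 3 * P t ≤ ρ t ∧ 0 ≤ P t)
    (hF2 : ∀ t ∈ Set.Ici t₀,
      2 * a'' t / a t + ((a' t) ^ 2 + 1) / (a t) ^ 2 = -(8 * π * P t))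
    (hH0 : 0 < a' t₀ / a t₀) :
    ∃ tc, t₀ ≤ tc ∧ a' tc / a tc = 0 := by
  have hdecel : ∀ t ∈ Ici t₀, 2 * a t * a'' t + a' t ^ 2 + 1 ≤ 0 := fun t ht =>
    two_mul_mul_add_sq_add_one_nonpos_of_friedmann (hpos t ht) (hec t ht).2 (hF2 t ht)
  have h₀ : 0 < a' t₀ := (div_pos_iff_of_pos_right (hpos t₀ self_mem_Ici)).mp hH0
  obtain ⟨tc, htc, hzero⟩ :=
    exists_eq_zero_of_two_mul_mul_add_sq_add_one_nonpos ha ha' hdecel hpos h₀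
  exact ⟨tc, htc, by rw [hzero, zero_div]⟩

/-- In a closed (`K = 1`) Friedmann model with matter satisfying `ρ ≥ 3P ≥ 0`,
the Hubble parameter `H = a'/a` cannot remain positive for all time: if `H(t₀) > 0`
then there is some `t_c ≥ t₀` with `H(t_c) = 0`. -/
theorem closed_friedmann_hubble_vanishes
    (t₀ : ℝ) (a a' a'' ρ P : ℝ → ℝ)
    (ha : ∀ t ∈ Set.Ici t₀, HasDerivWithinAt a (a' t) (Set.Ici t₀) t)
    (ha' : ∀ t ∈ Set.Ici t₀, HasDerivWithinAt a' (a'' t) (Set.Ici t₀) t)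
    (hpos : ∀ t ∈ Set.Ici t₀, 0 < a t)
    (hec : ∀ t ∈ Set.Ici t₀, 3 * P t ≤ ρ t ∧ 0 ≤ P t)
    (hF1 : ∀ t ∈ Set.Ici t₀, 3 * ((a' t) ^ 2 + 1) / (a t) ^ 2 = 8 * π * ρ t)
    (hF2 : ∀ t ∈ Set.Ici t₀,
      2 * a'' t / a t + ((a' t) ^ 2 + 1) / (a t) ^ 2 = -(8 * π * P t))
    (hH0 : 0 < a' t₀ / a t₀) :
    ∃ tc, t₀ ≤ tc ∧ a' tc / a tc = 0 :=
  closed_friedmann_hubble_vanishes_general t₀ a a' a'' ρ P ha ha' hpos hec hF2 hH0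
end
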